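/- Let T be a set of terms closed under subterms (T = Sub(T)), σ a ground substitution defined on vars(T), U = {p ≟ q : p,q ∈ T and pσ = qσ} the unification system of all equalities under σ between terms of T, and θ an idempotent most general unifier of U with vars(img(θ)) ⊆ vars(U). Then for every term t, tθσ = tσ. -/

import Mathlib

/-! `σ` unifies every equation `p ≟ q` with `pσ = qσ`, so the most general unifier gives
`σ = θτ` for some `τ`; idempotence of `θ` then yields `θσ = θθτ = θτ = σ`. -/

/-! ### Terms -/

/-- First-order terms: variables, ordinary constants, nonces (an infinite
subset of the constants), and function applications. -/
inductive Term : Type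
  | var : ℕ → Term
  | cst : ℕ → Term
  | nonce : ℕ → Term
  | func : ℕ → List Term → Term

namespace Term

/-- The subterm relation. -/
inductive IsSubterm : Term → Term → Prop
  | refl (t : Term) : IsSubterm t t
  | func {s t : Term} {f : ℕ} {args : List Term} :
      t ∈ args → IsSubterm s t → IsSubterm s (func f args)

/-- The set of subterms of a term. -/
def sub (t : Term) : Set Term := {s | IsSubterm s t}

/-- The set of (indices of) variables of a term. -/
def varsSet (t : Term) : Set ℕ := {x | IsSubterm (var x) t}

/-- A term is ground if it has no variables. -/
def Ground (t : Term) : Prop := varsSet t = ∅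

/-- The term is a variable. -/
def IsVar : Term → Prop
  | var _ => True
  | _ => False

/-- Application of a substitution to a term. -/
noncomputable def subst (σ : ℕ → Term) : Term → Term
  | var x => σ x
  | cst c => cst c
  | nonce n => nonce n
  | func f args => func f (args.attach.map (fun a => Term.subst σ a.1))
decreasing_by
  have := List.sizeOf_lt_of_mem a.2
  simp only [Term.func.sizeOf_spec]
  omega

/-- The function symbol `f` occurs in the term `t`. -/
def OccursFun (f : ℕ) (t : Term) : Prop := ∃ args, IsSubterm (func f args) t

end Term

/-! ### Substitutions -/

/-- Substitutions (maps from variables to terms). -/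
abbrev Subst := ℕ → Term

namespace Subst

/-- The domain of a substitution. -/
def dom (σ : Subst) : Set ℕ := {x | σ x ≠ .var x}

/-- The image of a substitution. -/
def img (σ : Subst) : Set Term := {t | ∃ x ∈ dom σ, σ x = t}

/-- Idempotency of a substitution. -/
def Idem (σ : Subst) : Prop := ∀ x, (σ x).subst σ = σ x

/-- A substitution is ground if its image consists of ground terms. -/
def IsGround (σ : Subst) : Prop := ∀ x ∈ dom σ, (σ x).Ground

open Classical in
/-- Union of two substitutions (intended for disjoint domains). -/
noncomputable def union (σ τ : Subst) : Subst := fun x =>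
  if σ x = Term.var x then τ x else σ x

end Subst

/-- Subterms of a set of terms. -/
def subT (T : Set Term) : Set Term := {s | ∃ t ∈ T, Term.IsSubterm s t}

/-- Variables of a set of terms. -/
def varsT (T : Set Term) : Set ℕ := {x | ∃ t ∈ T, Term.IsSubterm (.var x) t}

/-- DAG size of a set of terms: number of its subterms. -/
noncomputable def sizeT (T : Set Term) : ℕ := (subT T).ncard

/-- Size of a substitution: DAG size of its image. -/
noncomputable def sizeSubst (σ : Subst) : ℕ := sizeT σ.img

/-! ### Deduction systems, steps and derivations -/

/-- A deduction system: a finite set of (standard) deduction rules, each rule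
being a pair (left-hand sides, right-hand side) whose right-hand-side variables
occur in the left-hand sides.  Nonce-creation rules and reception rules are
built into the notions of steps/derivations below. -/
structure DeductionSystem where
  rules : Set (List Term × Term)
  finite : rules.Finite
  wf : ∀ p ∈ rules, p.2.varsSet ⊆ varsT {u | u ∈ p.1}

/-- A step of a derivation: a reception `? → t` or a standard deduction `l → r`
(nonce creations are standard deductions with empty left-hand side). -/
inductive Step
  | recv : Term → Step
  | std : List Term → Term → Step

namespace Step

/-- Right-hand side of a step. -/
def rhs : Step → Term
  | recv t => t
  | std _ r => r

/-- All terms occurring in the step. -/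
def terms : Step → Set Term
  | recv t => {t}
  | std l r => {r} ∪ {u | u ∈ l}

end Step

/-- The set of right-hand sides of the first `k` steps of `D`. -/
def RHSset (D : List Step) (k : ℕ) : Set Term :=
  {r | ∃ j < k, ∃ s, D[j]? = some s ∧ s.rhs = r}

/-- A step is a deduction of the system `DS`: a reception of a ground term, a
nonce creation, or a ground instance of a (standard) rule of `DS`. -/
def IsDeduction (DS : DeductionSystem) (s : Step) : Prop :=
  match s with
  | .recv t => t.Ground
  | .std l r =>
      (∀ u ∈ l, u.Ground) ∧ r.Ground ∧
        ((l = [] ∧ ∃ n, r = Term.nonce n) ∨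
          ∃ p ∈ DS.rules, ∃ σ : Subst,
            l = p.1.map (Term.subst σ) ∧ r = p.2.subst σ)

/-- A derivation: a sequence of deductions in which the left-hand side of every
standard step has already been deduced. -/
def IsDerivation (DS : DeductionSystem) (D : List Step) : Prop :=
  (∀ s ∈ D, IsDeduction DS s) ∧
  ∀ (i : ℕ) (l : List Term) (r : Term), D[i]? = some (Step.std l r) → ∀ u ∈ l, u ∈ RHSset D i

/-- The position of the first reception of `D` at index `≥ k` (or `|D|` if
there is none): (0-indexed version of) `Next(D, ·)`. -/
noncomputable def nextRecv (D : List Step) (k : ℕ) : ℕ :=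
  sInf ({D.length} ∪ {j | k ≤ j ∧ ∃ t, D[j]? = some (Step.recv t)})

/-- `Der DS K`: the set of ground terms derivable from the knowledge `K`. -/
def Der (DS : DeductionSystem) (K : Set Term) : Set Term :=
  {t | ∃ D : List Step, IsDerivation DS D ∧
        (∀ (j : ℕ) (u : Term), D[j]? = some (Step.recv u) → u ∈ K) ∧
        ∃ l, D.getLast? = some (Step.std l t)}

/-- No term is deduced twice in `D` by a standard rule. -/
def NoDuplicateStd (D : List Step) : Prop :=
  ∀ (i j : ℕ) (li lj : List Term) (r : Term), D[i]? = some (Step.std li r) → D[j]? = some (Step.std lj r) → i = j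

/-- `(T,σ)`-maximality of a derivation. -/
def MaximalDeriv (DS : DeductionSystem) (T : Set Term) (σ : Subst) (D : List Step) : Prop :=
  ∀ t ∈ subT T, ∀ k ≤ D.length,
    t.subst σ ∈ Der DS (RHSset D k) → t.subst σ ∈ RHSset D (nextRecv D k)

/-! ### Constraint systems -/

/-- A constraint: a reception `?t`, an emission `!t` or a negative
constraint `♮t`. -/
inductive Constraint
  | recv : Term → Constraint
  | send : Term → Constraint
  | neg : Term → Constraint

namespace Constraint

/-- The term of a constraint. -/
def term : Constraint → Term
  | recv t => t
  | send t => t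
  | neg t => t

/-- The constraint is a send constraint. -/
def isSend : Constraint → Bool
  | send _ => true
  | _ => false

/-- Apply a substitution to a constraint. -/
noncomputable def map (θ : Subst) : Constraint → Constraint
  | recv t => recv (t.subst θ)
  | send t => send (t.subst θ)
  | neg t => neg (t.subst θ)

end Constraint

/-- A (pre-)constraint system is a finite sequence of constraints. -/
abbrev CSystem := List Constraint

/-- The terms of a constraint system. -/
def csTerms (S : CSystem) : Set Term := {t | ∃ c ∈ S, c.term = t}

/-- `Sub(S)`. -/
def csSub (S : CSystem) : Set Term := subT (csTerms S)

/-- `vars(S)`. -/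
def csVars (S : CSystem) : Set ℕ := varsT (csTerms S)

/-- `|Sub(S)|`. -/
noncomputable def csSize (S : CSystem) : ℕ := sizeT (csTerms S)

/-- Apply a substitution to all constraints of a system. -/
noncomputable def csSubst (S : CSystem) (θ : Subst) : CSystem := S.map (Constraint.map θ)

/-- Origination and determination: `S` is a genuine constraint system. -/
def IsCS (S : CSystem) : Prop :=
  (∀ (i : ℕ) (t : Term), S[i]? = some (Constraint.send t) →
      t.varsSet ⊆ {x | ∃ j < i, ∃ u : Term, S[j]? = some (Constraint.recv u) ∧ x ∈ u.varsSet}) ∧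
  (∀ (i : ℕ) (t : Term), S[i]? = some (Constraint.neg t) →
      t.varsSet ⊆ {x | ∃ (j : ℕ) (u : Term), S[j]? = some (Constraint.recv u) ∧ x ∈ u.varsSet})

/-- The knowledge produced by the send constraints up to (and including) index
`i`, instantiated by `σ` (this is `{tⱼσ : j ≤ prev(i), S[j] = !tⱼ}`). -/
def knowledge (S : CSystem) (σ : Subst) (i : ℕ) : Set Term :=
  {u | ∃ j ≤ i, ∃ t, S[j]? = some (Constraint.send t) ∧ u = t.subst σ}

/-- A solution of a constraint system. -/
structure IsSolution (DS : DeductionSystem) (S : CSystem) (σ : Subst) : Prop where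
  ground : σ.IsGround
  idem : σ.Idem
  dom_eq : σ.dom = csVars S
  recv_mem : ∀ (i : ℕ) (t : Term), S[i]? = some (Constraint.recv t) → t.subst σ ∈ Der DS (knowledge S σ i)
  neg_not_mem : ∀ (i : ℕ) (t : Term), S[i]? = some (Constraint.neg t) → t.subst σ ∉ Der DS (knowledge S σ i)

/-- `prev(i)`: the last send index `≤ i` of `S`, if any. -/
def prevSend (S : CSystem) (i : ℕ) : Option ℕ :=
  ((List.range (i + 1)).filter (fun j => ((S[j]?).map Constraint.isSend).getD false)).max?

/-- `(S,σ)`-compliance of a derivation `D` with the mapping `α`: `α` is a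
strictly increasing bijection from the send indices of `S` onto the reception
positions of `D`, sending `!t` to the reception `? → tσ`. -/
structure Compliant (S : CSystem) (σ : Subst) (D : List Step) (α : ℕ → ℕ) : Prop where
  mono : ∀ (i j : ℕ) (ti tj : Term), S[i]? = some (Constraint.send ti) →
    S[j]? = some (Constraint.send tj) → i < j → α i < α j
  maps : ∀ (i : ℕ) (t : Term), S[i]? = some (Constraint.send t) →
    D[α i]? = some (Step.recv (t.subst σ))
  surj : ∀ (j : ℕ) (u : Term), D[j]? = some (Step.recv u) →
    ∃ i t, S[i]? = some (Constraint.send t) ∧ α i = j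

/-- Position in `D` of the first reception strictly after the reception
corresponding (via `α`) to the last send constraint `≤ i` of `S` (or the first
reception of `D` if there is no such send): this is `Next(D, α(prev(i)))`. -/
noncomputable def cutoff (S : CSystem) (D : List Step) (α : ℕ → ℕ) (i : ℕ) : ℕ :=
  match prevSend S i with
  | none => nextRecv D 0
  | some p => nextRecv D (α p + 1)

/-- `D, σ, α ⊢ S`: the derivation `D` is a proof of `σ ⊨ S`. -/
structure IsProof (DS : DeductionSystem) (S : CSystem) (σ : Subst)
    (D : List Step) (α : ℕ → ℕ) : Prop where
  deriv : IsDerivation DS D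
  compliant : Compliant S σ D α
  recv_proved : ∀ (i : ℕ) (t : Term), S[i]? = some (Constraint.recv t) →
    ∃ j < cutoff S D α i, ∃ s, D[j]? = some s ∧ s.rhs = t.subst σ
  neg_not_mem : ∀ (i : ℕ) (t : Term), S[i]? = some (Constraint.neg t) →
    t.subst σ ∉ Der DS (knowledge S σ i)

/-! ### Subterm deduction systems -/

/-- A composition rule: `x₁,…,xₙ → f(x₁,…,xₙ)` with pairwise distinct
variables `xᵢ`. -/
def IsCompRule (p : List Term × Term) : Prop :=
  ∃ (f : ℕ) (xs : List ℕ), xs.Nodup ∧ p.1 = xs.map Term.var ∧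
    p.2 = Term.func f (xs.map Term.var)

/-- A decomposition rule: the right-hand side is a subterm of a left-hand
side. -/
def IsDecompRule (p : List Term × Term) : Prop :=
  ∃ l ∈ p.1, p.2 ∈ l.sub

/-- A subterm deduction system: every standard rule is a composition or a
decomposition rule. -/
def SubtermSystem (DS : DeductionSystem) : Prop :=
  ∀ p ∈ DS.rules, IsCompRule p ∨ IsDecompRule p

/-- A step is a composition: a reception, a nonce creation, or an instance of
a composition rule of `DS`. -/
def IsCompositionStep (DS : DeductionSystem) (s : Step) : Prop :=
  match s with
  | .recv _ => True
  | .std l r =>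
      (l = [] ∧ ∃ n, r = Term.nonce n) ∨
        ∃ p ∈ DS.rules, IsCompRule p ∧
          ∃ σ : Subst, l = p.1.map (Term.subst σ) ∧ r = p.2.subst σ

/-- `l → r` is an instance (not necessarily ground) of a standard deduction
rule of the system. -/
def StdRuleInstance (DS : DeductionSystem) (l : List Term) (r : Term) : Prop :=
  (l = [] ∧ ∃ n, r = Term.nonce n) ∨
    ∃ p ∈ DS.rules, ∃ σ : Subst, l = p.1.map (Term.subst σ) ∧ r = p.2.subst σ

/-- DAG size of a rule. -/
noncomputable def ruleSize (p : List Term × Term) : ℕ :=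
  sizeT ({p.2} ∪ {u | u ∈ p.1})

/-- Maximal size of a decomposition rule of the system. -/
noncomputable def maxDecompSize (DS : DeductionSystem) : ℕ :=
  sSup {n | ∃ p ∈ DS.rules, IsDecompRule p ∧ ruleSize p = n}

/-! ### Localization -/

/-- `T` localizes the derivation `D` for `σ`. -/
def Localizes (DS : DeductionSystem) (T : Set Term) (σ : Subst) (D : List Step) : Prop :=
  ∀ (i : ℕ) (l : List Term) (r : Term), D[i]? = some (Step.std l r) →
    ∀ t ∈ subT T, ¬ t.IsVar → t.subst σ = r →
      ∃ ts : List Term, (∀ u ∈ ts, u ∈ subT T) ∧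
        (∀ u ∈ ts, u.subst σ ∈ RHSset D i) ∧ StdRuleInstance DS ts t

/-- `T` one-to-one localizes `D` for `σ`. -/
def OneToOneLocalizes (DS : DeductionSystem) (T : Set Term) (σ : Subst)
    (D : List Step) : Prop :=
  Localizes DS T σ D ∧ Set.InjOn (Term.subst σ) (subT T)

/-! ### Terms of a derivation, `Out(S)` -/

/-- The terms occurring in a derivation. -/
def derTerms (D : List Step) : Set Term := {t | ∃ s ∈ D, t ∈ s.terms}

/-- `Sub(D)`. -/
def subD (D : List Step) : Set Term := subT (derTerms D)

/-- The terms of the send constraints of `S`. -/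
def outTerms (S : CSystem) : Set Term := {t | Constraint.send t ∈ S}

/-! ### Milestone sequences -/

/-- An element of a milestone sequence: `→ t` or `? → t`. -/
inductive MStep
  | ded : Term → MStep
  | recvm : Term → MStep

/-- The term of a milestone element. -/
def MStep.term : MStep → Term
  | ded t => t
  | recvm t => t

/-- `M` is a milestone candidate sequence of `D` for `(T,σ)`. -/
def IsMilestoneOf (T : Set Term) (σ : Subst) (D : List Step) (M : List MStep) : Prop :=
  (∀ m ∈ M, m.term ∈ subT T) ∧
  ∃ α : ℕ → ℕ, (∀ i j, i < j → j < M.length → α i < α j) ∧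
    ∀ (i : ℕ) (m : MStep), M[i]? = some m →
      match m with
      | MStep.recvm t => D[α i]? = some (Step.recv (t.subst σ))
      | MStep.ded t => ∃ l, D[α i]? = some (Step.std l (t.subst σ))

/-- `M` is the `(T,σ)`-milestone sequence of `D`: a candidate of maximal
length. -/
def IsMilestoneSeq (T : Set Term) (σ : Subst) (D : List Step) (M : List MStep) : Prop :=
  IsMilestoneOf T σ D M ∧ ∀ M', IsMilestoneOf T σ D M' → M'.length ≤ M.length

/-! ### Free pairing symbol -/

/-- `f` occurs in the rule `p`. -/
def OccursInRule (f : ℕ) (p : List Term × Term) : Prop :=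
  (∃ t ∈ p.1, t.OccursFun f) ∨ p.2.OccursFun f

/-- The system contains a composition rule `x₁, x₂ → f(x₁,x₂)` where the
binary symbol `f` occurs in no other rule. -/
def FreePairing (DS : DeductionSystem) : Prop :=
  ∃ (f x₁ x₂ : ℕ), x₁ ≠ x₂ ∧
    ([Term.var x₁, Term.var x₂], Term.func f [Term.var x₁, Term.var x₂]) ∈ DS.rules ∧
    ∀ p ∈ DS.rules, OccursInRule f p →
      p = ([Term.var x₁, Term.var x₂], Term.func f [Term.var x₁, Term.var x₂])

/-! ### Unification -/

/-- `σ` is a unifier of the unification system `U`. -/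
def IsUnifier (U : Set (Term × Term)) (σ : Subst) : Prop :=
  ∀ pq ∈ U, Term.subst σ pq.1 = Term.subst σ pq.2

/-- `θ` is a most general unifier of `U`. -/
def IsMGU (U : Set (Term × Term)) (θ : Subst) : Prop :=
  IsUnifier U θ ∧ ∀ σ, IsUnifier U σ → ∃ τ : Subst, ∀ x, σ x = (θ x).subst τ

/-- The terms of a unification system. -/
def unifTerms (U : Set (Term × Term)) : Set Term :=
  {t | ∃ pq ∈ U, t = pq.1 ∨ t = pq.2}

/-- The variables of a unification system. -/
def unifVars (U : Set (Term × Term)) : Set ℕ := varsT (unifTerms U)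

namespace Term

theorem subst_func (σ : Subst) (f : ℕ) (args : List Term) :
    (func f args).subst σ = func f (args.map (subst σ)) := by
  rw [subst, List.map_attach_eq_pmap, List.pmap_eq_map]

theorem subst_subst (θ σ : Subst) :
    ∀ t : Term, (t.subst θ).subst σ = t.subst (fun x => (θ x).subst σ)
  | var x => by rw [subst, subst]
  | cst c => by simp only [subst]
  | nonce n => by simp only [subst]
  | func f args => by
    simp only [subst_func, List.map_map, func.injEq, true_and]
    exact List.map_congr_left fun a _ => subst_subst θ σ a

end Term

theorem Subst.Idem.subst_subst_of_eq_comp {θ σ τ : Subst} (hθ : θ.Idem)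
    (hσ : ∀ x, σ x = (θ x).subst τ) (t : Term) :
    (t.subst θ).subst σ = t.subst σ := by
  obtain rfl : σ = fun x => (θ x).subst τ := funext hσ
  rw [Term.subst_subst]
  congr 1
  funext x
  rw [← Term.subst_subst, hθ x]

theorem mgu_is_a_unit_general (T : Set Term) (σ : Subst) (θ : Subst) (hθ : θ.Idem)
    (hmgu : IsMGU {pq : Term × Term | pq.1 ∈ T ∧ pq.2 ∈ T ∧ pq.1.subst σ = pq.2.subst σ} θ) :
    ∀ t : Term, (t.subst θ).subst σ = t.subst σ := by
  obtain ⟨τ, hτ⟩ := hmgu.2 σ fun _ hpq => hpq.2.2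
  exact hθ.subst_subst_of_eq_comp hτ

/-- Lemma 5: if `θ` is an idempotent mgu of all the equalities between terms
of a subterm-closed set `T` induced by a ground substitution `σ` defined on
`vars(T)`, then `tθσ = tσ` for every term `t`. -/
theorem mgu_is_a_unit (T : Set Term) (hT : subT T = T)
    (σ : Subst) (hg : σ.IsGround) (hi : σ.Idem) (hd : σ.dom = varsT T)
    (θ : Subst) (hθ : θ.Idem)
    (hmgu : IsMGU {pq : Term × Term | pq.1 ∈ T ∧ pq.2 ∈ T ∧ pq.1.subst σ = pq.2.subst σ} θ)
    (hv : varsT θ.img ⊆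
      unifVars {pq : Term × Term | pq.1 ∈ T ∧ pq.2 ∈ T ∧ pq.1.subst σ = pq.2.subst σ}) :
    ∀ t : Term, (t.subst θ).subst σ = t.subst σ :=
  mgu_is_a_unit_general T σ θ hθ hmgu
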